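/- Let w be a positive non-decreasing weight function with diverging W and α_c(w) < ∞. For any δ > α_c(w) and any constant c ∈ ℝ, the series ∑ₙ 1 / w(W⁻¹(W(n)+δ) − c) converges (with the convention w(x) = w(0) for x ≤ 0). -/

import Mathlib

open MeasureTheory Filter Topology Set
open scoped ENNReal NNReal

noncomputable section

/-- Extension of a weight sequence to the reals: `w(t) = w(⌊t⌋)` (and `w 0` for `t < 0`). -/
def wext (w : ℕ → ℝ) (t : ℝ) : ℝ := w ⌊t⌋₊

/-- `W(t) = ∫₀ᵗ du / w(u)`. -/
def Wfun (v : ℝ → ℝ) (t : ℝ) : ℝ := ∫ u in (0:ℝ)..t, (v u)⁻¹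

/-- `I_α(w) = ∫₀^∞ dx / w(W⁻¹(W(x)+α))`, valued in `[0,∞]`. -/
def Ia (v : ℝ → ℝ) (Winv : ℝ → ℝ) (α : ℝ) : ℝ≥0∞ :=
  ∫⁻ x in Ioi (0:ℝ), ENNReal.ofReal (v (Winv (Wfun v x + α)))⁻¹

/-- The critical parameter `α_c(w) = inf {α ≥ 0 : I_α(w) < ∞} ∈ [0,∞]` (inf ∅ = ∞). -/
def alphac (v : ℝ → ℝ) (Winv : ℝ → ℝ) : ℝ≥0∞ :=
  sInf (ENNReal.ofReal '' {α : ℝ | 0 < α ∧ Ia v Winv α < ⊤})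

/-!
Choose `α < δ` with `I_α(w) < ∞`. The integrand `x ↦ 1/w(W⁻¹(W(x)+α))` is antitone on `[0,∞)`,
so by the integral test its values at the integers are summable. Finiteness of `I_α(w)` also
forces `w` to be unbounded; once `w ≥ c/(δ-α)`, stepping back by `c` from `W⁻¹(W(n)+δ)` lowers
`W` by at most `δ-α`, so `W⁻¹(W(n)+α) ≤ W⁻¹(W(n)+δ) - c` and the terms of the series are
eventually dominated by those values.
-/

theorem AntitoneOn.summable_of_setLIntegral_Ioi_zero_lt_top {f : ℝ → ℝ}
    (anti : AntitoneOn f (Ici 0)) (nonneg : ∀ t ∈ Ioi 0, 0 ≤ f t)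
    (hf : ∫⁻ t in Ioi 0, ENNReal.ofReal (f t) < ∞) :
    Summable (fun n : ℕ => f n) := by
  have hmeas : AEStronglyMeasurable f (volume.restrict (Ioi 0)) :=
    (aemeasurable_restrict_of_antitoneOn measurableSet_Ioi
      (anti.mono Ioi_subset_Ici_self)).aestronglyMeasurable
  have hnonneg : 0 ≤ᵐ[volume.restrict (Ioi 0)] f :=
    (ae_restrict_iff' measurableSet_Ioi).2 (ae_of_all _ nonneg)
  exact anti.summable_of_integrableOn_Ioi_zero
    ⟨hmeas, (hasFiniteIntegral_iff_ofReal hnonneg).2 hf⟩ nonneg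

section Wfun

variable {v : ℝ → ℝ}

theorem antitone_inv_of_pos_of_monotone (hpos : ∀ t, 0 < v t) (hmono : Monotone v) :
    Antitone fun u => (v u)⁻¹ :=
  fun a _ h => inv_anti₀ (hpos a) (hmono h)

theorem Wfun_zero : Wfun v 0 = 0 := intervalIntegral.integral_same

theorem Wfun_sub_eq_integral (hpos : ∀ t, 0 < v t) (hmono : Monotone v) (t s : ℝ) :
    Wfun v s - Wfun v t = ∫ u in t..s, (v u)⁻¹ := by
  have hanti := antitone_inv_of_pos_of_monotone hpos hmono
  rw [Wfun, Wfun, sub_eq_iff_eq_add',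
    intervalIntegral.integral_add_adjacent_intervals hanti.intervalIntegrable
      hanti.intervalIntegrable]

theorem div_le_Wfun_sub (hpos : ∀ t, 0 < v t) (hmono : Monotone v) {t s : ℝ} (h : t ≤ s) :
    (s - t) / v s ≤ Wfun v s - Wfun v t := by
  rw [Wfun_sub_eq_integral hpos hmono, div_eq_mul_inv, ← smul_eq_mul,
    ← intervalIntegral.integral_const]
  refine intervalIntegral.integral_mono_on h intervalIntegrable_const ?_
    fun u hu => inv_anti₀ (hpos u) (hmono hu.2)
  exact (antitone_inv_of_pos_of_monotone hpos hmono).intervalIntegrable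

theorem Wfun_sub_le_div (hpos : ∀ t, 0 < v t) (hmono : Monotone v) {t s : ℝ} (h : t ≤ s) :
    Wfun v s - Wfun v t ≤ (s - t) / v t := by
  rw [Wfun_sub_eq_integral hpos hmono, div_eq_mul_inv, ← smul_eq_mul,
    ← intervalIntegral.integral_const]
  refine intervalIntegral.integral_mono_on h ?_ intervalIntegrable_const
    fun u hu => inv_anti₀ (hpos t) (hmono hu.1)
  exact (antitone_inv_of_pos_of_monotone hpos hmono).intervalIntegrable

theorem Wfun_strictMono (hpos : ∀ t, 0 < v t) (hmono : Monotone v) : StrictMono (Wfun v) :=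
  fun _ s h => sub_pos.1 <| (div_pos (sub_pos.2 h) (hpos s)).trans_le
    (div_le_Wfun_sub hpos hmono h.le)

theorem Winv_le_iff (hpos : ∀ t, 0 < v t) (hmono : Monotone v) {Winv : ℝ → ℝ}
    (hWinv : ∀ y, 0 ≤ y → Wfun v (Winv y) = y) {y : ℝ} (hy : 0 ≤ y) (x : ℝ) :
    Winv y ≤ x ↔ y ≤ Wfun v x := by
  rw [← (Wfun_strictMono hpos hmono).le_iff_le, hWinv y hy]

theorem le_Winv_iff (hpos : ∀ t, 0 < v t) (hmono : Monotone v) {Winv : ℝ → ℝ}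
    (hWinv : ∀ y, 0 ≤ y → Wfun v (Winv y) = y) {y : ℝ} (hy : 0 ≤ y) (x : ℝ) :
    x ≤ Winv y ↔ Wfun v x ≤ y := by
  rw [← (Wfun_strictMono hpos hmono).le_iff_le, hWinv y hy]

theorem antitoneOn_inv_comp_Winv_Wfun_add (hpos : ∀ t, 0 < v t) (hmono : Monotone v)
    {Winv : ℝ → ℝ} (hWinv : ∀ y, 0 ≤ y → Wfun v (Winv y) = y) {α : ℝ} (hα : 0 ≤ α) :
    AntitoneOn (fun x => (v (Winv (Wfun v x + α)))⁻¹) (Ici 0) := by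
  intro x hx y _ hxy
  have hW := (Wfun_strictMono hpos hmono).monotone
  have hWx : 0 ≤ Wfun v x + α := by linarith [Wfun_zero (v := v) ▸ hW (mem_Ici.1 hx)]
  have hWxy : Wfun v x + α ≤ Wfun v y + α := by linarith [hW hxy]
  refine antitone_inv_of_pos_of_monotone hpos hmono ?_
  rwa [Winv_le_iff hpos hmono hWinv hWx, hWinv _ (hWx.trans hWxy)]

theorem summable_inv_comp_Winv_Wfun_add_of_Ia_lt_top (hpos : ∀ t, 0 < v t)
    (hmono : Monotone v) {Winv : ℝ → ℝ} (hWinv : ∀ y, 0 ≤ y → Wfun v (Winv y) = y)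
    {α : ℝ} (hα : 0 ≤ α) (hI : Ia v Winv α < ⊤) :
    Summable fun n : ℕ => (v (Winv (Wfun v n + α)))⁻¹ :=
  (antitoneOn_inv_comp_Winv_Wfun_add hpos hmono hWinv hα).summable_of_setLIntegral_Ioi_zero_lt_top
    (fun _ _ => (inv_pos.2 (hpos _)).le) hI

theorem Ia_eq_top_of_bddAbove (hpos : ∀ t, 0 < v t) (hv : BddAbove (range v))
    (Winv : ℝ → ℝ) (α : ℝ) : Ia v Winv α = ⊤ := by
  obtain ⟨M, hM⟩ := hv
  have hM0 : 0 < M := (hpos 0).trans_le (hM ⟨0, rfl⟩)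
  refine top_le_iff.1 ?_
  calc (⊤ : ℝ≥0∞) = ∫⁻ _ in Ioi (0 : ℝ), ENNReal.ofReal M⁻¹ := by
        rw [setLIntegral_const, Real.volume_Ioi, ENNReal.mul_top]
        exact (ENNReal.ofReal_pos.2 (inv_pos.2 hM0)).ne'
    _ ≤ Ia v Winv α :=
        lintegral_mono fun _ => ENNReal.ofReal_le_ofReal (inv_anti₀ (hpos _) (hM ⟨_, rfl⟩))

theorem eventually_inv_comp_Winv_Wfun_add_sub_le (hpos : ∀ t, 0 < v t) (hmono : Monotone v)
    (hunb : ¬ BddAbove (range v)) {Winv : ℝ → ℝ} (hWinv : ∀ y, 0 ≤ y → Wfun v (Winv y) = y)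
    {α δ : ℝ} (hα : 0 ≤ α) (hαδ : α < δ) (c : ℝ) :
    ∀ᶠ n : ℕ in atTop, (v (Winv (Wfun v n + δ) - c))⁻¹ ≤ (v (Winv (Wfun v n + α)))⁻¹ := by
  set c' := max c 0
  have hc' : 0 ≤ c' := le_max_right c 0
  obtain ⟨_, ⟨T, rfl⟩, hT⟩ := not_bddAbove_iff.1 hunb (c' / (δ - α))
  have hcT : c' ≤ (δ - α) * v T := by
    rw [mul_comm]; exact ((div_lt_iff₀ (sub_pos.2 hαδ)).1 hT).le
  filter_upwards [eventually_ge_atTop ⌈T + c'⌉₊] with n hn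
  have hWn : 0 ≤ Wfun v n := Wfun_zero (v := v) ▸
    (Wfun_strictMono hpos hmono).monotone n.cast_nonneg
  set x := Winv (Wfun v n + δ)
  have hWx : Wfun v x = Wfun v n + δ := hWinv _ (by linarith)
  have hnx : (n : ℝ) ≤ x := (le_Winv_iff hpos hmono hWinv (by linarith) _).2 (by linarith)
  have hTx : T ≤ x - c' := by linarith [Nat.ceil_le.1 hn]
  have hstep : Wfun v x - Wfun v (x - c') ≤ δ - α := calc
    _ ≤ (x - (x - c')) / v (x - c') := Wfun_sub_le_div hpos hmono (by linarith)
    _ = c' / v (x - c') := by ring_nf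
    _ ≤ c' / v T := div_le_div_of_nonneg_left hc' (hpos T) (hmono hTx)
    _ ≤ δ - α := (div_le_iff₀ (hpos T)).2 hcT
  have hle : Winv (Wfun v n + α) ≤ x - c :=
    ((Winv_le_iff hpos hmono hWinv (by linarith) _).2 (by linarith)).trans
      (by linarith [le_max_left c 0])
  exact antitone_inv_of_pos_of_monotone hpos hmono hle

end Wfun

theorem exists_Ia_lt_top_of_alphac_lt {v Winv : ℝ → ℝ} {δ : ℝ}
    (h : alphac v Winv < ENNReal.ofReal δ) : ∃ α, 0 < α ∧ α < δ ∧ Ia v Winv α < ⊤ := by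
  obtain ⟨_, ⟨α, ⟨hα, hI⟩, rfl⟩, hαδ⟩ := sInf_lt_iff.1 h
  exact ⟨α, hα, (ENNReal.ofReal_lt_ofReal_iff'.1 hαδ).1, hI⟩

theorem stmt14_general (w : ℕ → ℝ) (hpos : ∀ n, 0 < w n) (hmono : Monotone w)
    (Winv : ℝ → ℝ)
    (hWinv' : ∀ y : ℝ, 0 ≤ y → Wfun (wext w) (Winv y) = y)
    (δ : ℝ) (hδ : alphac (wext w) Winv < ENNReal.ofReal δ)
    (c : ℝ) :
    Summable (fun n : ℕ => (wext w (Winv (Wfun (wext w) n + δ) - c))⁻¹) := by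
  have hvpos : ∀ t, 0 < wext w t := fun _ => hpos _
  have hvmono : Monotone (wext w) := fun _ _ h => hmono (Nat.floor_mono h)
  obtain ⟨α, hα, hαδ, hI⟩ := exists_Ia_lt_top_of_alphac_lt hδ
  have hunb : ¬ BddAbove (range (wext w)) := fun hb =>
    hI.ne (Ia_eq_top_of_bddAbove hvpos hb Winv α)
  refine (summable_inv_comp_Winv_Wfun_add_of_Ia_lt_top hvpos hvmono hWinv' hα.le hI)
    |>.of_norm_bounded_eventually_nat ?_
  filter_upwards [eventually_inv_comp_Winv_Wfun_add_sub_le hvpos hvmono hunb hWinv' hα.le hαδ c]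
    with n hn
  rwa [Real.norm_of_nonneg (inv_pos.2 (hvpos _)).le]

/-- if `α_c(w) < ∞`, `δ > α_c(w)` and `c ∈ ℝ`, then
`∑ₙ 1/w(W⁻¹(W(n)+δ) − c) < ∞` (with `w(x) = w(0)` for `x ≤ 0`, as encoded by `wext`). -/
theorem stmt14 (w : ℕ → ℝ) (hpos : ∀ n, 0 < w n) (hmono : Monotone w)
    (hdiv : ¬ Summable (fun n : ℕ => (w n)⁻¹))
    (Winv : ℝ → ℝ)
    (hWinv : ∀ t : ℝ, 0 ≤ t → Winv (Wfun (wext w) t) = t)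
    (hWinv' : ∀ y : ℝ, 0 ≤ y → Wfun (wext w) (Winv y) = y)
    (δ : ℝ) (hδ : alphac (wext w) Winv < ENNReal.ofReal δ)
    (c : ℝ) :
    Summable (fun n : ℕ => (wext w (Winv (Wfun (wext w) n + δ) - c))⁻¹) :=
  stmt14_general w hpos hmono Winv hWinv' δ hδ c
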